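/- arXiv:2107.03955 — 3 statements merged into one kernel-verified Lean document; each statement's English description precedes it below -/
import Mathlib

section
/- For all 0 ≤ q < p < 1, kl(q : p) ≥ (p − q)²/(2p), where kl(q:p) = q log(q/p) + (1−q) log((1−q)/(1−p)). -/
/-!
Fix `p` and move the first argument `t` from `p` down to `q`. At `t = p` both sides vanish, and
the `t`-derivative of `klBin t p - (p - t)² / (2p)` is `log (t/p) - log ((1-t)/(1-p)) + (p - t)/p`,
which is nonpositive for `0 < t ≤ p < 1` because `log x ≤ x - 1` and `(1-t)/(1-p) ≥ 1`.
So the difference can only grow as `t` decreases to `q`.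
-/

/-- Binary KL divergence `kl(q : p) = q log(q/p) + (1-q) log((1-q)/(1-p))`. -/
noncomputable def klBin (q p : ℝ) : ℝ :=
  q * Real.log (q / p) + (1 - q) * Real.log ((1 - q) / (1 - p))

open Real Set

lemma klBin_self (p : ℝ) : klBin p p = 0 := by
  simp [klBin]

-- Rewritten through `x ↦ x log x`, which is continuous at `0`, unlike `log`.
lemma klBin_eq_mul_mul_log {p : ℝ} (hp0 : p ≠ 0) (hp1 : p ≠ 1) (q : ℝ) :
    klBin q p =
      p * (q / p * log (q / p)) + (1 - p) * ((1 - q) / (1 - p) * log ((1 - q) / (1 - p))) := by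
  have : 1 - p ≠ 0 := sub_ne_zero.2 hp1.symm
  simp only [klBin]
  field_simp

lemma continuous_klBin_left {p : ℝ} (hp0 : p ≠ 0) (hp1 : p ≠ 1) :
    Continuous fun q ↦ klBin q p := by
  simp only [klBin_eq_mul_mul_log hp0 hp1]
  fun_prop

lemma hasDerivAt_klBin_left {p t : ℝ} (hp0 : p ≠ 0) (hp1 : p ≠ 1) (ht0 : t ≠ 0)
    (ht1 : t ≠ 1) :
    HasDerivAt (fun q ↦ klBin q p) (log (t / p) - log ((1 - t) / (1 - p))) t := by
  have h1p : 1 - p ≠ 0 := sub_ne_zero.2 hp1.symm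
  have h1t : 1 - t ≠ 0 := sub_ne_zero.2 ht1.symm
  have hA := (hasDerivAt_id' t).mul (((hasDerivAt_id' t).div_const p).log (div_ne_zero ht0 hp0))
  have hB := ((hasDerivAt_id' t).const_sub 1).mul
    ((((hasDerivAt_id' t).const_sub 1).div_const (1 - p)).log (div_ne_zero h1t h1p))
  refine (hA.add hB).congr_deriv ?_
  rw [div_div_div_cancel_right₀ hp0, div_div_div_cancel_right₀ h1p, mul_one_div_cancel ht0,
    mul_div_cancel₀ _ h1t]
  ring

lemma log_div_sub_log_div_add_div_nonpos {p t : ℝ} (ht : 0 < t) (htp : t ≤ p) (hp : p < 1) :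
    log (t / p) - log ((1 - t) / (1 - p)) + (p - t) / p ≤ 0 := by
  have hp0 : 0 < p := ht.trans_le htp
  have hlog : log (t / p) ≤ t / p - 1 := log_le_sub_one_of_pos (by positivity)
  have hlog' : 0 ≤ log ((1 - t) / (1 - p)) :=
    log_nonneg ((one_le_div (by linarith)).2 (by linarith))
  have : t / p - 1 = -((p - t) / p) := by field_simp; ring
  linarith

lemma antitoneOn_klBin_sub_sq_div {p : ℝ} (hp0 : 0 < p) (hp1 : p < 1) :
    AntitoneOn (fun t ↦ klBin t p - (p - t) ^ 2 / (2 * p)) (Icc 0 p) := by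
  have hderiv : ∀ t ∈ Ioo 0 p, HasDerivAt (fun t ↦ klBin t p - (p - t) ^ 2 / (2 * p))
      (log (t / p) - log ((1 - t) / (1 - p)) + (p - t) / p) t := by
    rintro t ⟨ht0, htp⟩
    refine ((hasDerivAt_klBin_left hp0.ne' (by linarith) ht0.ne' (by linarith)).sub
      ((((hasDerivAt_id' t).const_sub p).pow 2).div_const (2 * p))).congr_deriv ?_
    field_simp
    ring
  refine antitoneOn_of_deriv_nonpos (convex_Icc 0 p) ?_ ?_ ?_
  · exact ((continuous_klBin_left hp0.ne' hp1.ne).sub (by fun_prop)).continuousOn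
  · rw [interior_Icc]
    exact fun t ht ↦ (hderiv t ht).differentiableAt.differentiableWithinAt
  · rw [interior_Icc]
    intro t ht
    rw [(hderiv t ht).deriv]
    exact log_div_sub_log_div_add_div_nonpos ht.1 ht.2.le hp1

/-- McAllester's refinement of Pinsker's inequality: `kl(q:p) ≥ (p-q)²/(2p)`. -/
theorem kl_ge_sq_div_two_p (q p : ℝ) (hq : 0 ≤ q) (hqp : q < p) (hp : p < 1) :
    klBin q p ≥ (p - q) ^ 2 / (2 * p) := by
  have hp0 : 0 < p := hq.trans_lt hqp
  have h := antitoneOn_klBin_sub_sq_div hp0 hp ⟨hq, hqp.le⟩ (right_mem_Icc.2 hp0.le) hqp.le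
  simpa [klBin_self] using h
end

section
/- Let X be a random variable taking values in {+1, −1} with E[X] = x, and let h(x) be the KL divergence of the law of X from the uniform distribution on {+1, −1}. Then h(x) = (1/2)[(1+x)log(1+x) + (1−x)log(1−x)] and h(x) ≤ x²·log 2 for all x ∈ [−1, 1], with log 2 the optimal constant. -/
/-!
Substituting `t = x²`, the map `t ↦ hKL √t` is convex on `[0, 1]`: its derivative is
`N(√t) / (4√t)` with `N u = log (1 + u) - log (1 - u)`, and `N u / u` is a secant slope of the
convex function `N` through `N 0 = 0`, hence increasing. A convex function with value `0` at `0`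
and `log 2` at `1` lies below `t log 2`; equality at `x = 1` shows `log 2` is optimal.
-/

/-- KL divergence of the `{+1,-1}`-valued distribution with mean `x`
(probabilities `(1+x)/2` and `(1-x)/2`) from the uniform distribution on `{+1,-1}`. -/
noncomputable def hKL (x : ℝ) : ℝ :=
  ((1 + x) / 2) * Real.log (((1 + x) / 2) / (1 / 2)) +
    ((1 - x) / 2) * Real.log (((1 - x) / 2) / (1 / 2))

open Real Set

lemma hKL_eq (x : ℝ) :
    hKL x = (1 / 2) * ((1 + x) * log (1 + x) + (1 - x) * log (1 - x)) := by
  rw [hKL, show (1 + x) / 2 / (1 / 2) = 1 + x by ring, show (1 - x) / 2 / (1 / 2) = 1 - x by ring]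
  ring

lemma hKL_neg (x : ℝ) : hKL (-x) = hKL x := by
  simp only [hKL_eq, sub_neg_eq_add, ← sub_eq_add_neg]
  ring

lemma continuous_hKL : Continuous hKL := by
  simp only [funext hKL_eq]
  fun_prop

lemma hasDerivAt_hKL {x : ℝ} (hx : x ∈ Ioo (-1 : ℝ) 1) :
    HasDerivAt hKL ((log (1 + x) - log (1 - x)) / 2) x := by
  have hp : 1 + x ≠ 0 := by linarith [hx.1]
  have hm : 1 - x ≠ 0 := by linarith [hx.2]
  have hplus := (hasDerivAt_mul_log hp).comp x ((hasDerivAt_id x).const_add 1)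
  have hminus := (hasDerivAt_mul_log hm).comp x ((hasDerivAt_id x).const_sub 1)
  rw [funext hKL_eq]
  exact ((hplus.add hminus).const_mul (1 / 2)).congr_deriv (by ring)

lemma convexOn_log_one_add_sub_log_one_sub :
    ConvexOn ℝ (Ico 0 1) fun u : ℝ => log (1 + u) - log (1 - u) := by
  have hderiv : ∀ u ∈ Ioo (-1 : ℝ) 1,
      HasDerivAt (fun u : ℝ => log (1 + u) - log (1 - u)) (2 / (1 - u ^ 2)) u := by
    intro u hu
    have hp : 1 + u ≠ 0 := by linarith [hu.1]
    have hm : 1 - u ≠ 0 := by linarith [hu.2]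
    refine ((((hasDerivAt_id u).const_add 1).log hp).sub
      (((hasDerivAt_id u).const_sub 1).log hm)).congr_deriv ?_
    have : 1 - u ^ 2 = (1 + u) * (1 - u) := by ring
    rw [id, this]
    field_simp
    ring
  apply MonotoneOn.convexOn_of_deriv (convex_Ico 0 1)
  · exact fun u hu => (hderiv u ⟨by linarith [hu.1], hu.2⟩).continuousAt.continuousWithinAt
  · rw [interior_Ico]
    exact fun u hu => (hderiv u ⟨by linarith [hu.1], hu.2⟩).differentiableAt.differentiableWithinAt
  · rw [interior_Ico]
    intro a ha b hb hab
    rw [(hderiv a ⟨by linarith [ha.1], ha.2⟩).deriv, (hderiv b ⟨by linarith [hb.1], hb.2⟩).deriv]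
    have : 0 < 1 - b ^ 2 := by nlinarith [hb.1, hb.2]
    gcongr 2 / ?_
    nlinarith [ha.1]

lemma monotoneOn_log_one_add_sub_log_one_sub_div :
    MonotoneOn (fun u : ℝ => (log (1 + u) - log (1 - u)) / u) (Ioo 0 1) := by
  intro a ha b hb hab
  have := convexOn_log_one_add_sub_log_one_sub.secant_mono (a := 0) ⟨le_rfl, one_pos⟩
    (Ioo_subset_Ico_self ha) (Ioo_subset_Ico_self hb) ha.1.ne' hb.1.ne' hab
  simpa using this

lemma hasDerivAt_hKL_sqrt {t : ℝ} (ht : t ∈ Ioo (0 : ℝ) 1) :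
    HasDerivAt (fun t => hKL √t) ((log (1 + √t) - log (1 - √t)) / √t / 4) t := by
  have hs : √t ∈ Ioo (-1 : ℝ) 1 :=
    ⟨by linarith [sqrt_nonneg t], (sqrt_lt' one_pos).2 (by simpa using ht.2)⟩
  refine ((hasDerivAt_hKL hs).comp t (hasDerivAt_sqrt ht.1.ne')).congr_deriv ?_
  field_simp
  ring

lemma convexOn_hKL_sqrt : ConvexOn ℝ (Icc 0 1) fun t => hKL √t := by
  apply MonotoneOn.convexOn_of_deriv (convex_Icc 0 1)
  · exact (continuous_hKL.comp continuous_sqrt).continuousOn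
  · rw [interior_Icc]
    exact fun t ht => (hasDerivAt_hKL_sqrt ht).differentiableAt.differentiableWithinAt
  · rw [interior_Icc]
    intro a ha b hb hab
    rw [(hasDerivAt_hKL_sqrt ha).deriv, (hasDerivAt_hKL_sqrt hb).deriv]
    have hsqrt : ∀ {t : ℝ}, t ∈ Ioo (0 : ℝ) 1 → √t ∈ Ioo (0 : ℝ) 1 := fun ht =>
      ⟨sqrt_pos.2 ht.1, (sqrt_lt' one_pos).2 (by simpa using ht.2)⟩
    gcongr ?_ / 4
    exact monotoneOn_log_one_add_sub_log_one_sub_div (hsqrt ha) (hsqrt hb) (sqrt_le_sqrt hab)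

lemma hKL_zero : hKL 0 = 0 := by simp [hKL_eq]

lemma hKL_one : hKL 1 = log 2 := by norm_num [hKL_eq]; ring

lemma hKL_le {x : ℝ} (hx : x ∈ Icc (-1 : ℝ) 1) : hKL x ≤ x ^ 2 * log 2 := by
  have hx2 : x ^ 2 ≤ 1 := (sq_le_one_iff_abs_le_one x).2 (abs_le.2 hx)
  have habs : hKL |x| = hKL x := by
    rcases abs_choice x with h | h <;> simp [h, hKL_neg]
  calc hKL x = hKL √((1 - x ^ 2) • 0 + x ^ 2 • 1) := by simp [sqrt_sq_eq_abs, habs]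
    _ ≤ (1 - x ^ 2) • hKL √0 + x ^ 2 • hKL √1 :=
      convexOn_hKL_sqrt.2 ⟨le_rfl, zero_le_one⟩ ⟨zero_le_one, le_rfl⟩ (sub_nonneg.2 hx2)
        (sq_nonneg x) (sub_add_cancel 1 (x ^ 2))
    _ = x ^ 2 * log 2 := by simp [hKL_zero, hKL_one]

theorem entropy_pm1_bound :
    (∀ x ∈ Set.Icc (-1 : ℝ) 1,
        hKL x = (1 / 2) * ((1 + x) * Real.log (1 + x) + (1 - x) * Real.log (1 - x)) ∧
        hKL x ≤ x ^ 2 * Real.log 2) ∧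
      ∀ c : ℝ, (∀ x ∈ Set.Icc (-1 : ℝ) 1, hKL x ≤ c * x ^ 2) → Real.log 2 ≤ c := by
  refine ⟨fun x hx => ⟨hKL_eq x, hKL_le hx⟩, fun c hc => ?_⟩
  simpa [hKL_one] using hc 1 ⟨by norm_num, le_rfl⟩
end

section
/- The function g(x) = ((1+x)log(1+x) + (1−x)log(1−x))/x² is increasing on (0,1), has infimum 1 (limit as x→0⁺), and supremum 2·log 2 (limit as x→1⁻). -/
/-!
Write `g = N / x²` with `N x = (1+x) log(1+x) + (1-x) log(1-x)`. Then `N' = L := log(1+x) - log(1-x)`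
and `L' = 2 / (1 - x²)`, so `x³ g' = x L - 2 N`, a function vanishing at `0` with derivative
`2x / (1 - x²) - L`, which in turn vanishes at `0` and has derivative `4x² / (1 - x²)² > 0`.
Hence `g' > 0` on `(0,1)`. Near `0`, L'Hôpital gives `g → L'(0) / 2 = 1`; at `1`, `g` is
continuous because `t log t` is, with value `2 log 2`. Monotonicity turns the two one-sided
limits into the infimum and supremum.
-/

open Filter

noncomputable def gFun (x : ℝ) : ℝ :=
  ((1 + x) * Real.log (1 + x) + (1 - x) * Real.log (1 - x)) / x ^ 2

open Real Set Topology

lemma strictMonoOn_Ico_of_hasDerivAt_pos {f f' : ℝ → ℝ} {a b : ℝ}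
    (hf : ∀ x ∈ Ico a b, HasDerivAt f (f' x) x) (hf' : ∀ x ∈ Ioo a b, 0 < f' x) :
    StrictMonoOn f (Ico a b) :=
  strictMonoOn_of_hasDerivWithinAt_pos (convex_Ico a b)
    (fun x hx ↦ (hf x hx).continuousAt.continuousWithinAt)
    (fun x hx ↦ (hf x (interior_subset hx)).hasDerivWithinAt)
    (fun x hx ↦ hf' x (by rwa [interior_Ico] at hx))

lemma tendsto_div_sq_nhdsGT_zero {f f' : ℝ → ℝ} {c : ℝ}
    (hf : ∀ᶠ x in 𝓝 0, HasDerivAt f (f' x) x) (hf0 : f 0 = 0) (hf'0 : f' 0 = 0)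
    (hf' : HasDerivAt f' c 0) :
    Tendsto (fun x ↦ f x / x ^ 2) (𝓝[>] 0) (𝓝 (c / 2)) := by
  have hslope : Tendsto (fun x ↦ x⁻¹ * f' x) (𝓝[>] 0) (𝓝 c) := by
    refine (hasDerivAt_iff_tendsto_slope.mp hf').mono_left
      (nhdsWithin_mono _ fun x hx ↦ ne_of_gt hx) |>.congr fun x ↦ ?_
    simp [slope_def_field, hf'0, div_eq_inv_mul]
  refine HasDerivAt.lhopital_zero_nhdsGT (g' := fun x ↦ 2 * x) (nhdsWithin_le_nhds hf)
    (Eventually.of_forall fun x ↦ by simpa using hasDerivAt_pow 2 x)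
    (eventually_nhdsWithin_of_forall fun x (hx : 0 < x) ↦ by positivity) ?_ ?_ ?_
  · simpa [hf0] using hf.self_of_nhds.continuousAt.tendsto.mono_left nhdsWithin_le_nhds
  · simpa using ((continuous_pow 2).tendsto (0 : ℝ)).mono_left nhdsWithin_le_nhds
  · refine (hslope.div_const 2).congr fun x ↦ ?_
    field_simp

noncomputable def gNum (x : ℝ) : ℝ := (1 + x) * log (1 + x) + (1 - x) * log (1 - x)

noncomputable def logRatio (x : ℝ) : ℝ := log (1 + x) - log (1 - x)

lemma continuous_gNum : Continuous gNum :=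
  (continuous_mul_log.comp (by fun_prop)).add (continuous_mul_log.comp (by fun_prop))

lemma hasDerivAt_gNum {x : ℝ} (hx : x ∈ Ioo (-1) 1) : HasDerivAt gNum (logRatio x) x := by
  have hp := (hasDerivAt_mul_log (x := 1 + x) (by linarith [hx.1])).comp x
    ((hasDerivAt_id' x).const_add 1)
  have hm := (hasDerivAt_mul_log (x := 1 - x) (by linarith [hx.2])).comp x
    ((hasDerivAt_id' x).const_sub 1)
  refine (hp.add hm).congr_deriv ?_
  simp only [logRatio]
  ring

lemma hasDerivAt_logRatio {x : ℝ} (hx : x ∈ Ioo (-1) 1) :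
    HasDerivAt logRatio (2 / (1 - x ^ 2)) x := by
  have hp : 1 + x ≠ 0 := by linarith [hx.1]
  have hm : 1 - x ≠ 0 := by linarith [hx.2]
  have h : 1 - x ^ 2 ≠ 0 := by nlinarith [hx.1, hx.2]
  refine ((((hasDerivAt_id' x).const_add 1).log hp).sub
    (((hasDerivAt_id' x).const_sub 1).log hm)).congr_deriv ?_
  field_simp
  ring

lemma logRatio_lt {x : ℝ} (hx : x ∈ Ioo 0 1) : logRatio x < 2 * x / (1 - x ^ 2) := by
  suffices StrictMonoOn (fun x ↦ 2 * x / (1 - x ^ 2) - logRatio x) (Ico 0 1) by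
    simpa [logRatio] using this (left_mem_Ico.2 one_pos) (Ioo_subset_Ico_self hx) hx.1
  refine strictMonoOn_Ico_of_hasDerivAt_pos (f' := fun x ↦ 4 * x ^ 2 / (1 - x ^ 2) ^ 2)
    (fun x hx ↦ ?_) (fun x hx ↦ ?_)
  · have hx' : x ∈ Ioo (-1) 1 := ⟨by linarith [hx.1], hx.2⟩
    have h : 1 - x ^ 2 ≠ 0 := by nlinarith [hx'.1, hx'.2]
    refine ((((hasDerivAt_id' x).const_mul 2).div ((hasDerivAt_pow 2 x).const_sub 1) h).sub
      (hasDerivAt_logRatio hx')).congr_deriv ?_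
    field_simp
    ring
  · have : 0 < 1 - x ^ 2 := by nlinarith [hx.1, hx.2]
    exact div_pos (by nlinarith [hx.1]) (by positivity)

lemma two_mul_gNum_lt {x : ℝ} (hx : x ∈ Ioo 0 1) : 2 * gNum x < x * logRatio x := by
  suffices StrictMonoOn (fun x ↦ x * logRatio x - 2 * gNum x) (Ico 0 1) by
    simpa [logRatio, gNum] using this (left_mem_Ico.2 one_pos) (Ioo_subset_Ico_self hx) hx.1
  refine strictMonoOn_Ico_of_hasDerivAt_pos (f' := fun x ↦ 2 * x / (1 - x ^ 2) - logRatio x)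
    (fun x hx ↦ ?_) (fun x hx ↦ sub_pos.2 (logRatio_lt hx))
  have hx' : x ∈ Ioo (-1) 1 := ⟨by linarith [hx.1], hx.2⟩
  have h : 1 - x ^ 2 ≠ 0 := by nlinarith [hx'.1, hx'.2]
  refine (((hasDerivAt_id' x).mul (hasDerivAt_logRatio hx')).sub
    ((hasDerivAt_gNum hx').const_mul 2)).congr_deriv ?_
  field_simp
  ring

lemma hasDerivAt_gFun {x : ℝ} (hx : x ∈ Ioo 0 1) :
    HasDerivAt gFun ((x * logRatio x - 2 * gNum x) / x ^ 3) x := by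
  have h : x ≠ 0 := hx.1.ne'
  refine ((hasDerivAt_gNum ⟨by linarith [hx.1], hx.2⟩).div (hasDerivAt_pow 2 x)
    (pow_ne_zero 2 h)).congr_deriv ?_
  field_simp
  ring

lemma strictMonoOn_gFun : StrictMonoOn gFun (Ioo 0 1) :=
  strictMonoOn_of_hasDerivWithinAt_pos (convex_Ioo 0 1)
    (fun x hx ↦ (hasDerivAt_gFun hx).continuousAt.continuousWithinAt)
    (fun x hx ↦ (hasDerivAt_gFun (interior_subset hx)).hasDerivWithinAt)
    (fun x hx ↦ by
      rw [interior_Ioo] at hx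
      exact div_pos (sub_pos.2 (two_mul_gNum_lt hx)) (pow_pos hx.1 3))

lemma tendsto_gFun_nhdsGT_zero : Tendsto gFun (𝓝[>] 0) (𝓝 1) := by
  have hderiv : ∀ᶠ x in 𝓝 0, HasDerivAt gNum (logRatio x) x :=
    eventually_of_mem (Ioo_mem_nhds (by norm_num) one_pos) fun _ ↦ hasDerivAt_gNum
  have h := tendsto_div_sq_nhdsGT_zero hderiv (by simp [gNum]) (by simp [logRatio])
    (hasDerivAt_logRatio (by norm_num))
  norm_num at h
  exact h

lemma tendsto_gFun_nhdsLT_one : Tendsto gFun (𝓝[<] 1) (𝓝 (2 * log 2)) := by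
  have h : ContinuousAt gFun 1 :=
    continuous_gNum.continuousAt.div (continuous_pow 2).continuousAt (by norm_num)
  have h1 : gFun 1 = 2 * log 2 := by norm_num [gFun]
  exact h1 ▸ h.tendsto.mono_left nhdsWithin_le_nhds

theorem gFun_increasing_inf_sup :
    StrictMonoOn gFun (Set.Ioo (0 : ℝ) 1) ∧
    IsGLB (gFun '' Set.Ioo (0 : ℝ) 1) 1 ∧
    IsLUB (gFun '' Set.Ioo (0 : ℝ) 1) (2 * Real.log 2) ∧
    Tendsto gFun (nhdsWithin 0 (Set.Ioi 0)) (nhds 1) ∧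
    Tendsto gFun (nhdsWithin 1 (Set.Iio 1)) (nhds (2 * Real.log 2)) := by
  have hne : (Ioo (0 : ℝ) 1).Nonempty := nonempty_Ioo.2 one_pos
  refine ⟨strictMonoOn_gFun, ?_, ?_, tendsto_gFun_nhdsGT_zero, tendsto_gFun_nhdsLT_one⟩
  · exact (isGLB_Ioo one_pos).isGLB_of_tendsto strictMonoOn_gFun.monotoneOn hne
      (tendsto_gFun_nhdsGT_zero.mono_left (nhdsWithin_mono _ Ioo_subset_Ioi_self))
  · exact (isLUB_Ioo one_pos).isLUB_of_tendsto strictMonoOn_gFun.monotoneOn hne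
      (tendsto_gFun_nhdsLT_one.mono_left (nhdsWithin_mono _ Ioo_subset_Iio_self))
end
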